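/- arXiv:2302.09262 — 2 statements merged into one kernel-verified Lean document; each statement's English description precedes it below -/
import Mathlib

section
/- Let τ ∈ (0,1), α ∈ [0,2], and let (μ_l)_{l∈ℤ} be the frequencies μ_l = 2πl/(b−a) on the torus of length b−a > 0. For any square-summable Fourier coefficients (v̂_l), define w by ŵ_l = φ₁(−iτμ_l²) v̂_l where φ₁(z)=(e^z−1)/z, φ₁(0)=1. Then Σ_l (1+μ_l²)^α |ŵ_l|² ≤ C(α)² τ^{−α} Σ_l |v̂_l|², where C(α) = 2^{α/2}(1+μ_1^{−2})^{α/2}. -/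
/-!
For real `θ`, `‖φ₁(iθ)‖ = ‖e^{iθ} - 1‖ / |θ|` is at most `1` and at most `2 / |θ|`, hence at most
`(2 / |θ|)^{α/2}` for `α ∈ [0, 2]`. With `θ = -τ μ_l²` this gives
`(1 + μ_l²)^α ‖φ₁‖² ≤ (2 (1 + μ_l⁻²) / τ)^α`, and since `μ_l = l μ_1` the right-hand side is
largest at `l = ±1`. Summing against `‖v̂_l‖²` gives the claim.
-/

/-- The entire function `φ₁(z) = (e^z − 1)/z`, with `φ₁(0) = 1`. -/
noncomputable def phi1 (z : ℂ) : ℂ := if z = 0 then 1 else (Complex.exp z - 1) / z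

open Complex

lemma norm_phi1_I_mul_ofReal {θ : ℝ} (hθ : θ ≠ 0) :
    ‖phi1 (I * θ)‖ = ‖exp (I * θ) - 1‖ / |θ| := by
  rw [phi1, if_neg (by simp [hθ]), norm_div]
  simp

lemma norm_phi1_I_mul_ofReal_le_one (θ : ℝ) : ‖phi1 (I * θ)‖ ≤ 1 := by
  rcases eq_or_ne θ 0 with rfl | hθ
  · simp [phi1]
  rw [norm_phi1_I_mul_ofReal hθ, div_le_one (abs_pos.mpr hθ)]
  exact Real.norm_exp_I_mul_ofReal_sub_one_le

lemma norm_phi1_I_mul_ofReal_le_two_div {θ : ℝ} (hθ : θ ≠ 0) :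
    ‖phi1 (I * θ)‖ ≤ 2 / |θ| := by
  rw [norm_phi1_I_mul_ofReal hθ, norm_exp_I_mul_ofReal_sub_one, norm_mul, Real.norm_eq_abs]
  gcongr
  simpa using Real.abs_sin_le_one (θ / 2)

lemma Real.le_rpow_of_le_one_of_le {x y s : ℝ} (hx : 0 ≤ x) (hx1 : x ≤ 1) (hxy : x ≤ y)
    (hs0 : 0 ≤ s) (hs1 : s ≤ 1) : x ≤ y ^ s :=
  calc x = x ^ (1 : ℝ) := (Real.rpow_one x).symm
    _ ≤ x ^ s := Real.rpow_le_rpow_of_exponent_ge' hx hx1 hs0 hs1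
    _ ≤ y ^ s := Real.rpow_le_rpow hx hxy hs0

lemma norm_phi1_I_mul_ofReal_sq_le_rpow {θ : ℝ} (hθ : θ ≠ 0) {α : ℝ} (hα0 : 0 ≤ α)
    (hα2 : α ≤ 2) : ‖phi1 (I * θ)‖ ^ 2 ≤ (2 / |θ|) ^ α := by
  have hbound : ‖phi1 (I * θ)‖ ≤ (2 / |θ|) ^ (α / 2) :=
    Real.le_rpow_of_le_one_of_le (norm_nonneg _) (norm_phi1_I_mul_ofReal_le_one θ)
      (norm_phi1_I_mul_ofReal_le_two_div hθ) (by linarith) (by linarith)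
  calc ‖phi1 (I * θ)‖ ^ 2 ≤ ((2 / |θ|) ^ (α / 2)) ^ 2 := by gcongr
    _ = (2 / |θ|) ^ α := by
      rw [← Real.rpow_mul_natCast (by positivity)]
      norm_num

/-- At `m = 0` the junk value `(0 ^ 2)⁻¹ = 0` makes the right-hand side `(2 / τ) ^ α`, which is
`≥ 1` because `τ ≤ 2`. -/
lemma rpow_mul_norm_phi1_sq_le (m : ℝ) {τ α : ℝ} (hτ0 : 0 < τ) (hτ2 : τ ≤ 2) (hα0 : 0 ≤ α)
    (hα2 : α ≤ 2) :
    (1 + m ^ 2) ^ α * ‖phi1 (-I * τ * (m : ℂ) ^ 2)‖ ^ 2 ≤ (2 * (1 + (m ^ 2)⁻¹) / τ) ^ α := by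
  rcases eq_or_ne m 0 with rfl | hm
  · simpa [phi1] using Real.one_le_rpow ((one_le_div hτ0).mpr hτ2) hα0
  have hτm : 0 < τ * m ^ 2 := by positivity
  have hθ : -(τ * m ^ 2) ≠ 0 := by linarith
  have harg : -I * τ * (m : ℂ) ^ 2 = I * ((-(τ * m ^ 2) : ℝ) : ℂ) := by push_cast; ring
  calc (1 + m ^ 2) ^ α * ‖phi1 (-I * τ * (m : ℂ) ^ 2)‖ ^ 2
      ≤ (1 + m ^ 2) ^ α * (2 / (τ * m ^ 2)) ^ α := by
        rw [harg]
        gcongr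
        simpa [abs_of_pos hτm] using
          norm_phi1_I_mul_ofReal_sq_le_rpow hθ hα0 hα2
    _ = (2 * (1 + (m ^ 2)⁻¹) / τ) ^ α := by
      rw [← Real.mul_rpow (by positivity) (by positivity)]
      congr 1
      field_simp
      ring

lemma inv_sq_intCast_mul_le (l : ℤ) (x : ℝ) : ((l * x) ^ 2)⁻¹ ≤ (x ^ 2)⁻¹ := by
  rw [mul_pow, mul_inv]
  refine mul_le_of_le_one_left (by positivity) ?_
  rcases eq_or_ne l 0 with rfl | hl
  · simp
  exact inv_le_one_of_one_le₀ (mod_cast (one_le_sq_iff_one_le_abs _).mpr (Int.one_le_abs hl))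

theorem phi1_smoothing_sum_general (a b τ α : ℝ)
    (hτ0 : 0 < τ) (hτ1 : τ < 1) (hα0 : 0 ≤ α) (hα2 : α ≤ 2)
    (μ : ℤ → ℝ) (hμ : ∀ l, μ l = 2 * Real.pi * l / (b - a))
    (v : ℤ → ℂ) (hv : Summable fun l => ‖v l‖ ^ 2)
    (w : ℤ → ℂ) (hw : ∀ l, w l = phi1 (-Complex.I * (τ : ℂ) * ((μ l : ℝ) : ℂ) ^ 2) * v l) :
    (Summable fun l => (1 + (μ l) ^ 2) ^ α * ‖w l‖ ^ 2) ∧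
      (∑' l, (1 + (μ l) ^ 2) ^ α * ‖w l‖ ^ 2) ≤
        (2 ^ (α / 2) * (1 + ((μ 1) ^ 2)⁻¹) ^ (α / 2)) ^ 2 * τ ^ (-α) *
          ∑' l, ‖v l‖ ^ 2 := by
  set K := 2 * (1 + (μ 1 ^ 2)⁻¹) / τ with hK
  have hC : (2 ^ (α / 2) * (1 + (μ 1 ^ 2)⁻¹) ^ (α / 2)) ^ 2 * τ ^ (-α) = K ^ α := by
    rw [← Real.mul_rpow (by norm_num) (by positivity), ← Real.rpow_mul_natCast (by positivity),
      Real.rpow_neg hτ0.le, ← Real.inv_rpow hτ0.le, Nat.cast_ofNat, div_mul_cancel₀ α two_ne_zero,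
      ← Real.mul_rpow (by positivity) (by positivity), ← div_eq_mul_inv]
  have hμl : ∀ l : ℤ, μ l = l * μ 1 := fun l => by rw [hμ, hμ]; push_cast; ring
  have hbound : ∀ l, (1 + μ l ^ 2) ^ α * ‖w l‖ ^ 2 ≤ K ^ α * ‖v l‖ ^ 2 := fun l => by
    rw [hw, norm_mul, mul_pow, ← mul_assoc]
    gcongr
    calc (1 + μ l ^ 2) ^ α * ‖phi1 (-I * τ * (μ l : ℂ) ^ 2)‖ ^ 2
        ≤ (2 * (1 + (μ l ^ 2)⁻¹) / τ) ^ α :=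
          rpow_mul_norm_phi1_sq_le (μ l) hτ0 (by linarith) hα0 hα2
      _ ≤ K ^ α := by
          rw [hK]
          gcongr (2 * (1 + ?_) / τ) ^ α
          rw [hμl l]
          exact inv_sq_intCast_mul_le l (μ 1)
  have hsum : Summable fun l => (1 + μ l ^ 2) ^ α * ‖w l‖ ^ 2 :=
    (hv.mul_left _).of_nonneg_of_le (fun l => by positivity) hbound
  refine ⟨hsum, ?_⟩
  rw [hC, ← tsum_mul_left]
  exact hsum.tsum_le_tsum hbound (hv.mul_left _)

/-- Parseval-side smoothing property of `φ₁(iτΔ)` on the torus of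
length `b − a`: if `ŵ_l = φ₁(−iτμ_l²) v̂_l` with `μ_l = 2πl/(b−a)`, then for
`τ ∈ (0,1)` and `α ∈ [0,2]`,
`Σ_l (1+μ_l²)^α |ŵ_l|² ≤ C(α)² τ^{−α} Σ_l |v̂_l|²` with
`C(α) = 2^{α/2}(1+μ₁^{−2})^{α/2}`. -/
theorem phi1_smoothing_sum (a b τ α : ℝ) (hab : a < b)
    (hτ0 : 0 < τ) (hτ1 : τ < 1) (hα0 : 0 ≤ α) (hα2 : α ≤ 2)
    (μ : ℤ → ℝ) (hμ : ∀ l, μ l = 2 * Real.pi * l / (b - a))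
    (v : ℤ → ℂ) (hv : Summable fun l => ‖v l‖ ^ 2)
    (w : ℤ → ℂ) (hw : ∀ l, w l = phi1 (-Complex.I * (τ : ℂ) * ((μ l : ℝ) : ℂ) ^ 2) * v l) :
    (Summable fun l => (1 + (μ l) ^ 2) ^ α * ‖w l‖ ^ 2) ∧
      (∑' l, (1 + (μ l) ^ 2) ^ α * ‖w l‖ ^ 2) ≤
        (2 ^ (α / 2) * (1 + ((μ 1) ^ 2)⁻¹) ^ (α / 2)) ^ 2 * τ ^ (-α) *
          ∑' l, ‖v l‖ ^ 2 :=
  phi1_smoothing_sum_general a b τ α hτ0 hτ1 hα0 hα2 μ hμ v hv w hw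
end

section
/- For f(ρ) = ρ^σ ln ρ with σ > 0 (and the convention G(0)=0), the map G(z) = |z|^{2σ} ln(|z|²) · z on ℂ is locally Lipschitz: for every M₀ > 0, |G(z₁) − G(z₂)| ≤ C(σ)(1 + M₀^{2σ} + M₀^{2σ}|ln M₀|)|z₁ − z₂| whenever |z₁|, |z₂| ≤ M₀. -/
/-!
Write `G z = g ‖z‖ • z` with `g t = t ^ (2σ) log (t²) = 2 t ^ (2σ) log t`. For `‖z₂‖ ≤ ‖z₁‖`,
`G z₁ - G z₂ = g ‖z₁‖ • (z₁ - z₂) + (g ‖z₁‖ - g ‖z₂‖) • z₂`. The first term is controlled because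
`t ^ p |log t| ≤ 1 / p` on `(0, 1]`, the second because by the mean value theorem
`s |g r - g s| ≤ sup_{[s, r]} t |g' t| · (r - s)` and `t g' t = 2σ g t + 2 t ^ (2σ)` is bounded on `[0, M₀]`.
-/

open Real

namespace Real

lemma rpow_mul_abs_log_le {p t M : ℝ} (hp : 0 < p) (ht : 0 ≤ t) (htM : t ≤ M) :
    t ^ p * |log t| ≤ 1 / p + M ^ p * |log M| := by
  have hM : 0 ≤ M ^ p * |log M| := mul_nonneg (rpow_nonneg (ht.trans htM) p) (abs_nonneg _)
  rcases ht.eq_or_lt with rfl | ht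
  · rw [zero_rpow hp.ne', zero_mul]
    positivity
  rcases le_total t 1 with ht1 | ht1
  · have := abs_log_mul_self_rpow_lt t p ht ht1 hp
    rw [abs_mul, abs_of_pos (rpow_pos_of_pos ht p)] at this
    linarith
  · rw [abs_of_nonneg (log_nonneg ht1), abs_of_nonneg (log_nonneg (ht1.trans htM))]
    have : t ^ p * log t ≤ M ^ p * log M :=
      mul_le_mul (rpow_le_rpow ht.le htM hp.le) (log_le_log ht htM) (log_nonneg ht1)
        (rpow_nonneg (ht.trans_le htM).le p)
    linarith [one_div_pos.mpr hp]

lemma hasDerivAt_rpow_mul_log {p x : ℝ} (hx : 0 < x) :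
    HasDerivAt (fun t => t ^ p * log t) (p * x ^ (p - 1) * log x + x ^ p * x⁻¹) x :=
  (hasDerivAt_rpow_const (Or.inl hx.ne')).mul (hasDerivAt_log hx.ne')

lemma mul_abs_rpow_mul_log_sub_le {p s r M : ℝ} (hp : 0 < p) (hs : 0 ≤ s) (hsr : s ≤ r)
    (hrM : r ≤ M) :
    s * |r ^ p * log r - s ^ p * log s| ≤ (1 + M ^ p + p * (M ^ p * |log M|)) * (r - s) := by
  have hbound : 0 ≤ 1 + M ^ p + p * (M ^ p * |log M|) := by
    have := rpow_nonneg (hs.trans (hsr.trans hrM)) p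
    positivity
  rcases hs.eq_or_lt with rfl | hs
  · rw [zero_mul]
    exact mul_nonneg hbound (by linarith)
  rcases hsr.eq_or_lt with rfl | hsr
  · simp
  obtain ⟨c, ⟨hsc, hcr⟩, hc⟩ := exists_hasDerivAt_eq_slope (fun t => t ^ p * log t)
    (fun x => p * x ^ (p - 1) * log x + x ^ p * x⁻¹) hsr
    (fun x hx => ((continuousAt_rpow_const x p (Or.inl (hs.trans_le hx.1).ne')).mul
      (continuousAt_log (hs.trans_le hx.1).ne')).continuousWithinAt)
    (fun x hx => hasDerivAt_rpow_mul_log (hs.trans hx.1))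
  have hc0 : 0 < c := hs.trans hsc
  have hslope : r ^ p * log r - s ^ p * log s =
      (p * c ^ p * log c + c ^ p) / c * (r - s) := by
    rw [eq_div_iff (sub_pos.mpr hsr).ne'] at hc
    rw [← hc, rpow_sub_one hc0.ne']
    field_simp
  have hcM : c ^ p * |log c| ≤ 1 / p + M ^ p * |log M| :=
    rpow_mul_abs_log_le hp hc0.le (hcr.le.trans hrM)
  have hcpow : c ^ p ≤ M ^ p := rpow_le_rpow hc0.le (hcr.le.trans hrM) hp.le
  have hnum : |p * c ^ p * log c + c ^ p| ≤ 1 + M ^ p + p * (M ^ p * |log M|) := by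
    calc |p * c ^ p * log c + c ^ p| ≤ p * (c ^ p * |log c|) + c ^ p := by
          refine (abs_add_le _ _).trans_eq ?_
          rw [abs_mul, abs_mul, abs_of_pos hp, abs_of_pos (rpow_pos_of_pos hc0 p), mul_assoc]
      _ ≤ p * (1 / p + M ^ p * |log M|) + M ^ p := by gcongr
      _ = 1 + M ^ p + p * (M ^ p * |log M|) := by field_simp; ring
  calc s * |r ^ p * log r - s ^ p * log s|
      = s / c * |p * c ^ p * log c + c ^ p| * (r - s) := by
        rw [hslope, abs_mul, abs_div, abs_of_pos hc0, abs_of_pos (sub_pos.mpr hsr)]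
        ring
    _ ≤ 1 * (1 + M ^ p + p * (M ^ p * |log M|)) * (r - s) := by
        gcongr
        exact (div_le_one hc0).mpr hsc.le
    _ = _ := by rw [one_mul]

end Real

theorem norm_smul_sub_smul_le_of_radial {E : Type*} [NormedAddCommGroup E] [NormedSpace ℝ E]
    {g : ℝ → ℝ} {M A B : ℝ} (hB0 : 0 ≤ B) (hA : ∀ t, 0 ≤ t → t ≤ M → |g t| ≤ A)
    (hB : ∀ s r, 0 ≤ s → s ≤ r → r ≤ M → s * |g r - g s| ≤ B * (r - s))
    {x y : E} (hx : ‖x‖ ≤ M) (hy : ‖y‖ ≤ M) :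
    ‖g ‖x‖ • x - g ‖y‖ • y‖ ≤ (A + B) * ‖x - y‖ := by
  wlog hyx : ‖y‖ ≤ ‖x‖ generalizing x y
  · rw [norm_sub_rev, norm_sub_rev x]
    exact this hy hx (le_of_not_ge hyx)
  have hsplit : g ‖x‖ • x - g ‖y‖ • y = g ‖x‖ • (x - y) + (g ‖x‖ - g ‖y‖) • y := by
    rw [smul_sub, sub_smul]; abel
  calc ‖g ‖x‖ • x - g ‖y‖ • y‖
      ≤ |g ‖x‖| * ‖x - y‖ + ‖y‖ * |g ‖x‖ - g ‖y‖| := by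
        rw [hsplit, mul_comm ‖y‖, ← Real.norm_eq_abs, ← Real.norm_eq_abs, ← norm_smul, ← norm_smul]
        exact norm_add_le _ _
    _ ≤ A * ‖x - y‖ + B * (‖x‖ - ‖y‖) :=
        add_le_add (by gcongr; exact hA _ (norm_nonneg x) hx) (hB _ _ (norm_nonneg y) hyx hx)
    _ ≤ A * ‖x - y‖ + B * ‖x - y‖ := by
        gcongr
        exact norm_sub_norm_le x y
    _ = (A + B) * ‖x - y‖ := by ring

/-- for `G(z) = |z|^{2σ} ln(|z|²) z` with `σ > 0` (and `G(0)=0`,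
which holds automatically since `|0|^{2σ} = 0` and `ln 0 = 0` by convention),
for every `M₀ > 0`:
`|G(z₁) − G(z₂)| ≤ C(σ)(1 + M₀^{2σ} + M₀^{2σ}|ln M₀|)|z₁ − z₂|`
whenever `|z₁|, |z₂| ≤ M₀`. -/
theorem log_power_nonlinearity_lipschitz (σ : ℝ) (hσ : 0 < σ) :
    ∃ C : ℝ, 0 < C ∧ ∀ M₀ : ℝ, 0 < M₀ → ∀ z₁ z₂ : ℂ,
      ‖z₁‖ ≤ M₀ → ‖z₂‖ ≤ M₀ →
      ‖(((‖z₁‖ ^ (2 * σ) * Real.log (‖z₁‖ ^ 2) : ℝ) : ℂ) * z₁ -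
           ((‖z₂‖ ^ (2 * σ) * Real.log (‖z₂‖ ^ 2) : ℝ) : ℂ) * z₂)‖ ≤
        C * (1 + M₀ ^ (2 * σ) + M₀ ^ (2 * σ) * |Real.log M₀|) * ‖z₁ - z₂‖ := by
  refine ⟨1 / σ + 2 + 4 * σ, by positivity, fun M hM z₁ z₂ h₁ h₂ => ?_⟩
  have hp : 0 < 2 * σ := by linarith
  have hlog_sq (t : ℝ) : t ^ (2 * σ) * log (t ^ 2) = 2 * (t ^ (2 * σ) * log t) := by
    rw [log_pow]; push_cast; ring
  have hA (t : ℝ) (ht : 0 ≤ t) (htM : t ≤ M) :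
      |t ^ (2 * σ) * log (t ^ 2)| ≤ 2 * (1 / (2 * σ) + M ^ (2 * σ) * |log M|) := by
    rw [hlog_sq, abs_mul, abs_mul, abs_two, abs_of_nonneg (rpow_nonneg ht _)]
    gcongr
    exact rpow_mul_abs_log_le hp ht htM
  have hB (s r : ℝ) (hs : 0 ≤ s) (hsr : s ≤ r) (hrM : r ≤ M) :
      s * |r ^ (2 * σ) * log (r ^ 2) - s ^ (2 * σ) * log (s ^ 2)| ≤
        2 * (1 + M ^ (2 * σ) + 2 * σ * (M ^ (2 * σ) * |log M|)) * (r - s) := by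
    rw [hlog_sq, hlog_sq, ← mul_sub, abs_mul, abs_two]
    linarith [mul_abs_rpow_mul_log_sub_le hp hs hsr hrM]
  have hX : 0 ≤ M ^ (2 * σ) := rpow_nonneg hM.le _
  have hY : 0 ≤ M ^ (2 * σ) * |log M| := mul_nonneg hX (abs_nonneg _)
  simp only [← Complex.real_smul]
  refine (norm_smul_sub_smul_le_of_radial (by positivity) hA hB h₁ h₂).trans ?_
  gcongr
  have hhalf : 2 * (1 / (2 * σ)) = 1 / σ := by field_simp
  have hinv : 0 ≤ 1 / σ := by positivity
  nlinarith [mul_nonneg hinv hX, mul_nonneg hinv hY, mul_nonneg hσ.le hX]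
end
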